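/- arXiv:2511.16172 — 4 statements merged into one kernel-verified Lean document; each statement's English description precedes it below -/
import Mathlib

section
/- Let a, b > 0, 0 < α < β < 1, c₁, c₂ > 0, and k ∈ ℕ. Then (1 + a/T^α)^{⌊c₁T⌋} · (1 − b/T^β)^{⌊c₂T⌋} / T^k → ∞ as T → ∞ along the natural numbers; that is, when the explosive rate exceeds the collapsing rate (α < β), the combined factor φ_a^{⌊c₁T⌋} φ_b^{⌊c₂T⌋} with φ_a = 1 + a/T^α and φ_b = 1 − b/T^β diverges to infinity faster than any power of T. -/
open Filter Real Topology

/-- `log (1 + x) ≥ x / 2` for `0 ≤ x ≤ 1`. -/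
lemma aux_log_one_add (x : ℝ) (hx0 : 0 ≤ x) (hx1 : x ≤ 1) :
    x / 2 ≤ Real.log (1 + x) := by
  have h1 : (0:ℝ) < 1 + x := by linarith
  have h := Real.one_sub_inv_le_log_of_pos h1
  have h2 : (1 + x)⁻¹ ≤ 1 - x / 2 := by
    rw [inv_eq_one_div, div_le_iff₀ h1]; nlinarith
  linarith

/-- `log (1 - y) ≥ -2y` for `0 ≤ y ≤ 1/2`. -/
lemma aux_log_one_sub (y : ℝ) (hy0 : 0 ≤ y) (hy1 : y ≤ 1/2) :
    -(2 * y) ≤ Real.log (1 - y) := by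
  have h1 : (0:ℝ) < 1 - y := by linarith
  have h := Real.one_sub_inv_le_log_of_pos h1
  have h2 : (1 - y)⁻¹ ≤ 1 + 2 * y := by
    rw [inv_eq_one_div, div_le_iff₀ h1]; nlinarith
  linarith

/-- The factored lower bound tends to infinity, over the reals. -/
lemma aux_g_tendsto (a b α β c₁ c₂ : ℝ) (ha : 0 < a) (hb : 0 < b)
    (hα0 : 0 < α) (hαβ : α < β) (hβ1 : β < 1) (hc₁ : 0 < c₁) (hc₂ : 0 < c₂) (k : ℕ) :
    Tendsto (fun x : ℝ =>
      x ^ (1 - α) * (a * c₁ / 2 - a / (2 * x) - 2 * b * c₂ * x ^ (α - β)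
        - (k : ℝ) * (Real.log x / x ^ (1 - α)))) atTop atTop := by
  have h1α : 0 < 1 - α := by linarith
  have h1 : Tendsto (fun x : ℝ => x ^ (1 - α)) atTop atTop :=
    tendsto_rpow_atTop h1α
  have hA : Tendsto (fun x : ℝ => a / (2 * x)) atTop (𝓝 0) :=
    tendsto_const_nhds.div_atTop (tendsto_id.const_mul_atTop (by norm_num))
  have hB : Tendsto (fun x : ℝ => 2 * b * c₂ * x ^ (α - β)) atTop (𝓝 0) := by
    simpa using (tendsto_rpow_neg_atTop (by linarith : 0 < -(α - β))).const_mul (2 * b * c₂)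
  have hC : Tendsto (fun x : ℝ => (k : ℝ) * (Real.log x / x ^ (1 - α))) atTop (𝓝 0) := by
    simpa using ((isLittleO_log_rpow_atTop h1α).tendsto_div_nhds_zero).const_mul (k : ℝ)
  have hfac : Tendsto (fun x : ℝ => a * c₁ / 2 - a / (2 * x) - 2 * b * c₂ * x ^ (α - β)
      - (k : ℝ) * (Real.log x / x ^ (1 - α))) atTop (𝓝 (a * c₁ / 2)) := by
    have hconst : Tendsto (fun _ : ℝ => a * c₁ / 2) atTop (𝓝 (a * c₁ / 2)) :=
      tendsto_const_nhds
    have := ((hconst.sub hA).sub hB).sub hC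
    simpa using this
  exact h1.atTop_mul_pos (by positivity) hfac

/-- When the explosive rate exceeds the collapsing rate (`α < β`), the combined factor
`(1 + a/T^α)^⌊c₁T⌋ (1 − b/T^β)^⌊c₂T⌋` diverges to `∞` faster than any power of `T`. -/
theorem stmt4 (a b α β c₁ c₂ : ℝ) (ha : 0 < a) (hb : 0 < b)
    (hα0 : 0 < α) (hαβ : α < β) (hβ1 : β < 1) (hc₁ : 0 < c₁) (hc₂ : 0 < c₂) (k : ℕ) :
    Filter.Tendsto
      (fun T : ℕ =>
        (1 + a / (T : ℝ) ^ α) ^ ⌊c₁ * (T : ℝ)⌋₊ * (1 - b / (T : ℝ) ^ β) ^ ⌊c₂ * (T : ℝ)⌋₊ /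
          (T : ℝ) ^ k)
      Filter.atTop Filter.atTop := by
  have hβ0 : 0 < β := lt_trans hα0 hαβ
  have hcast : Tendsto (fun T : ℕ => (T : ℝ)) atTop atTop :=
    tendsto_natCast_atTop_atTop
  -- eventual smallness conditions
  have hxa : Tendsto (fun T : ℕ => a / (T : ℝ) ^ α) atTop (𝓝 0) := by
    exact tendsto_const_nhds.div_atTop ((tendsto_rpow_atTop hα0).comp hcast)
  have hxb : Tendsto (fun T : ℕ => b / (T : ℝ) ^ β) atTop (𝓝 0) := by
    exact tendsto_const_nhds.div_atTop ((tendsto_rpow_atTop hβ0).comp hcast)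
  have hevA : ∀ᶠ T : ℕ in atTop, a / (T : ℝ) ^ α ≤ 1 := by
    filter_upwards [hxa.eventually (eventually_le_nhds (by norm_num : (0:ℝ) < 1))] with T h
    exact h
  have hevB : ∀ᶠ T : ℕ in atTop, b / (T : ℝ) ^ β ≤ 1/2 := by
    filter_upwards [hxb.eventually (eventually_le_nhds (by norm_num : (0:ℝ) < 1/2))] with T h
    exact h
  have hevT : ∀ᶠ T : ℕ in atTop, (1:ℝ) ≤ (T : ℝ) :=
    hcast.eventually_ge_atTop 1
  -- the log of the expression
  set L : ℕ → ℝ := fun T =>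
    (⌊c₁ * (T : ℝ)⌋₊ : ℝ) * Real.log (1 + a / (T : ℝ) ^ α)
      + (⌊c₂ * (T : ℝ)⌋₊ : ℝ) * Real.log (1 - b / (T : ℝ) ^ β)
      - (k : ℝ) * Real.log (T : ℝ) with hL
  -- L tends to atTop, by comparison with the factored bound g
  have hLtop : Tendsto L atTop atTop := by
    have hg := (aux_g_tendsto a b α β c₁ c₂ ha hb hα0 hαβ hβ1 hc₁ hc₂ k).comp hcast
    refine tendsto_atTop_mono' _ ?_ hg
    filter_upwards [hevA, hevB, hevT] with T hA hB hT
    set x : ℝ := (T : ℝ) with hx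
    have hx0 : (0:ℝ) < x := lt_of_lt_of_le one_pos hT
    have hxα : (0:ℝ) < x ^ α := rpow_pos_of_pos hx0 α
    have hxβ : (0:ℝ) < x ^ β := rpow_pos_of_pos hx0 β
    have hA0 : 0 ≤ a / x ^ α := by positivity
    have hB0 : 0 ≤ b / x ^ β := by positivity
    have hlog1 : a / x ^ α / 2 ≤ Real.log (1 + a / x ^ α) := aux_log_one_add _ hA0 hA
    have hlog2 : -(2 * (b / x ^ β)) ≤ Real.log (1 - b / x ^ β) := aux_log_one_sub _ hB0 hB
    have hlog1' : 0 ≤ Real.log (1 + a / x ^ α) := le_trans (by positivity) hlog1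
    have hlog2' : Real.log (1 - b / x ^ β) ≤ 0 :=
      Real.log_nonpos (by linarith) (by linarith)
    -- first term lower bound
    have h1 : (c₁ * x - 1) * (a / x ^ α / 2)
        ≤ (⌊c₁ * x⌋₊ : ℝ) * Real.log (1 + a / x ^ α) := by
      rcases le_or_gt (c₁ * x - 1) 0 with h | h
      · exact le_trans (mul_nonpos_of_nonpos_of_nonneg h (by positivity)) (by positivity)
      · exact mul_le_mul (Nat.sub_one_lt_floor _).le hlog1 (by positivity) (Nat.cast_nonneg _)
    -- second term lower bound
    have h2 : (c₂ * x) * (-(2 * (b / x ^ β)))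
        ≤ (⌊c₂ * x⌋₊ : ℝ) * Real.log (1 - b / x ^ β) := by
      have hc2x : 0 ≤ c₂ * x := by positivity
      calc (c₂ * x) * (-(2 * (b / x ^ β)))
          ≤ (c₂ * x) * Real.log (1 - b / x ^ β) :=
            mul_le_mul_of_nonneg_left hlog2 hc2x
        _ ≤ (⌊c₂ * x⌋₊ : ℝ) * Real.log (1 - b / x ^ β) :=
            mul_le_mul_of_nonpos_right (Nat.floor_le hc2x) hlog2'
    -- algebra: the factored g equals the expanded lower bound
    have halg : x ^ (1 - α) * (a * c₁ / 2 - a / (2 * x) - 2 * b * c₂ * x ^ (α - β)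
        - (k : ℝ) * (Real.log x / x ^ (1 - α)))
        = (c₁ * x - 1) * (a / x ^ α / 2) + (c₂ * x) * (-(2 * (b / x ^ β)))
          - (k : ℝ) * Real.log x := by
      have e1 : x ^ (1 - α) = x / x ^ α := by
        rw [Real.rpow_sub hx0, Real.rpow_one]
      have e2 : x ^ (α - β) = x ^ α / x ^ β := Real.rpow_sub hx0 _ _
      have h1α : x ^ (1 - α) ≠ 0 := (rpow_pos_of_pos hx0 _).ne'
      rw [e1, e2]
      field_simp
      ring
    calc x ^ (1 - α) * (a * c₁ / 2 - a / (2 * x) - 2 * b * c₂ * x ^ (α - β)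
          - (k : ℝ) * (Real.log x / x ^ (1 - α)))
        = (c₁ * x - 1) * (a / x ^ α / 2) + (c₂ * x) * (-(2 * (b / x ^ β)))
          - (k : ℝ) * Real.log x := halg
      _ ≤ L T := by simp only [hL]; exact sub_le_sub_right (add_le_add h1 h2) _
  -- the original function eventually equals exp ∘ L
  have heq : (fun T : ℕ =>
      (1 + a / (T : ℝ) ^ α) ^ ⌊c₁ * (T : ℝ)⌋₊ * (1 - b / (T : ℝ) ^ β) ^ ⌊c₂ * (T : ℝ)⌋₊ /
        (T : ℝ) ^ k) =ᶠ[atTop] fun T => Real.exp (L T) := by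
    filter_upwards [hevB, hevT] with T hB hT
    set x : ℝ := (T : ℝ) with hx
    have hx0 : (0:ℝ) < x := lt_of_lt_of_le one_pos hT
    have hxα : (0:ℝ) < x ^ α := rpow_pos_of_pos hx0 α
    have hP : (0:ℝ) < 1 + a / x ^ α := by positivity
    have hQ : (0:ℝ) < 1 - b / x ^ β := by linarith
    rw [hL, Real.exp_sub, Real.exp_add, Real.exp_nat_mul, Real.exp_nat_mul,
      Real.exp_nat_mul, Real.exp_log hP, Real.exp_log hQ, Real.exp_log hx0]
  exact Tendsto.congr' heq.symm (Real.tendsto_exp_atTop.comp hLtop)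
end

section
/- Let a, b > 0, 0 < β < α < 1, c₁, c₂ > 0, and k ∈ ℕ. Then T^k · (1 + a/T^α)^{⌊c₁T⌋} · (1 − b/T^β)^{⌊c₂T⌋} → 0 as T → ∞ along the natural numbers (T large enough that 0 < 1 − b/T^β < 1); that is, when the collapsing rate exceeds the explosive rate (α > β), the combined factor φ_a^{⌊c₁T⌋} φ_b^{⌊c₂T⌋} converges to zero faster than any power of T. -/
open Filter Real

private lemma stmt5_aux (a b α β c₁ c₂ : ℝ) (ha : 0 < a) (hb : 0 < b)
    (hβ0 : 0 < β) (hβα : β < α) (hα1 : α < 1) (hc₁ : 0 < c₁) (hc₂ : 0 < c₂) (k : ℕ) :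
    Tendsto (fun x : ℝ => (k : ℝ) * Real.log x + a * (c₁ * x) / x ^ α
        - b * (c₂ * x - 1) / x ^ β) atTop atBot := by
  have h1β : (0:ℝ) < 1 - β := by linarith
  have hB : Tendsto (fun x : ℝ => (k : ℝ) * (Real.log x / x ^ (1 - β))
      + a * c₁ * x ^ (β - α) - b * c₂ + b * x⁻¹) atTop (nhds ((k:ℝ) * 0 + a * c₁ * 0 - b * c₂ + b * 0)) := by
    apply Filter.Tendsto.add
    apply Filter.Tendsto.sub
    apply Filter.Tendsto.add
    · exact ((isLittleO_log_rpow_atTop h1β).tendsto_div_nhds_zero).const_mul _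
    · have : Tendsto (fun x : ℝ => x ^ (-(α - β))) atTop (nhds 0) :=
        tendsto_rpow_neg_atTop (by linarith)
      simpa using this.const_mul (a * c₁)
    · exact tendsto_const_nhds
    · exact tendsto_inv_atTop_zero.const_mul b
  have hlim : ((k:ℝ) * 0 + a * c₁ * 0 - b * c₂ + b * 0) = -(b * c₂) := by ring
  rw [hlim] at hB
  have hmul : Tendsto (fun x : ℝ => x ^ (1 - β) * ((k : ℝ) * (Real.log x / x ^ (1 - β))
      + a * c₁ * x ^ (β - α) - b * c₂ + b * x⁻¹)) atTop atBot :=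
    (tendsto_rpow_atTop h1β).atTop_mul_neg (by nlinarith) hB
  refine hmul.congr' ?_
  filter_upwards [eventually_gt_atTop 0] with x hx
  have hα : (0:ℝ) < x ^ α := Real.rpow_pos_of_pos hx α
  have hβ' : (0:ℝ) < x ^ β := Real.rpow_pos_of_pos hx β
  rw [Real.rpow_sub hx 1 β, Real.rpow_sub hx β α, Real.rpow_one]
  field_simp
  ring

/-- When the collapsing rate exceeds the explosive rate (`α > β`), the combined factor
`(1 + a/T^α)^⌊c₁T⌋ (1 − b/T^β)^⌊c₂T⌋` converges to zero faster than any power of `T`. -/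
theorem stmt5 (a b α β c₁ c₂ : ℝ) (ha : 0 < a) (hb : 0 < b)
    (hβ0 : 0 < β) (hβα : β < α) (hα1 : α < 1) (hc₁ : 0 < c₁) (hc₂ : 0 < c₂) (k : ℕ) :
    Filter.Tendsto
      (fun T : ℕ =>
        (T : ℝ) ^ k * (1 + a / (T : ℝ) ^ α) ^ ⌊c₁ * (T : ℝ)⌋₊ *
          (1 - b / (T : ℝ) ^ β) ^ ⌊c₂ * (T : ℝ)⌋₊)
      Filter.atTop (nhds 0) := by
  have hL := stmt5_aux a b α β c₁ c₂ ha hb hβ0 hβα hα1 hc₁ hc₂ k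
  have hg : Tendsto (fun T : ℕ => Real.exp ((k : ℝ) * Real.log (T:ℝ)
      + a * (c₁ * (T:ℝ)) / (T:ℝ) ^ α - b * (c₂ * (T:ℝ) - 1) / (T:ℝ) ^ β)) atTop (nhds 0) :=
    (Real.tendsto_exp_atBot.comp (hL.comp tendsto_natCast_atTop_atTop))
  -- eventually, b ≤ T^β and T ≥ 1
  have hev : ∀ᶠ T : ℕ in atTop, b ≤ ((T:ℝ)) ^ β ∧ (1:ℝ) ≤ (T:ℝ) := by
    have h1 : Tendsto (fun T : ℕ => ((T:ℝ)) ^ β) atTop atTop :=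
      (tendsto_rpow_atTop hβ0).comp tendsto_natCast_atTop_atTop
    filter_upwards [h1.eventually_ge_atTop b,
      tendsto_natCast_atTop_atTop.eventually_ge_atTop (1:ℝ)] with T h h' using ⟨h, h'⟩
  apply squeeze_zero' (g := fun T : ℕ => Real.exp ((k : ℝ) * Real.log (T:ℝ)
      + a * (c₁ * (T:ℝ)) / (T:ℝ) ^ α - b * (c₂ * (T:ℝ) - 1) / (T:ℝ) ^ β)) ?_ ?_ hg
  · filter_upwards [hev] with T ⟨hbT, hT1⟩
    have hT0 : (0:ℝ) < T := by linarith
    have hα : (0:ℝ) < (T:ℝ) ^ α := Real.rpow_pos_of_pos hT0 α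
    have hβ' : (0:ℝ) < (T:ℝ) ^ β := Real.rpow_pos_of_pos hT0 β
    have h1 : (0:ℝ) ≤ 1 + a / (T:ℝ) ^ α := by positivity
    have h2 : (0:ℝ) ≤ 1 - b / (T:ℝ) ^ β := by
      rw [sub_nonneg, div_le_one hβ']; exact hbT
    positivity
  · filter_upwards [hev] with T ⟨hbT, hT1⟩
    have hT0 : (0:ℝ) < T := by linarith
    have hα : (0:ℝ) < (T:ℝ) ^ α := Real.rpow_pos_of_pos hT0 α
    have hβ' : (0:ℝ) < (T:ℝ) ^ β := Real.rpow_pos_of_pos hT0 β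
    set x := a / (T:ℝ) ^ α with hxdef
    set y := b / (T:ℝ) ^ β with hydef
    have hx0 : 0 ≤ x := by positivity
    have hy0 : 0 ≤ y := by positivity
    have hy1 : y ≤ 1 := by rw [hydef, div_le_one hβ']; exact hbT
    set n₁ := ⌊c₁ * (T:ℝ)⌋₊
    set n₂ := ⌊c₂ * (T:ℝ)⌋₊
    have hA : (1 + x) ^ n₁ ≤ Real.exp ((n₁:ℝ) * x) := by
      rw [Real.exp_nat_mul]
      exact pow_le_pow_left₀ (by linarith) (by linarith [Real.add_one_le_exp x]) n₁
    have hBle : (1 - y) ^ n₂ ≤ Real.exp ((n₂:ℝ) * (-y)) := by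
      rw [Real.exp_nat_mul]
      exact pow_le_pow_left₀ (by linarith) (by linarith [Real.add_one_le_exp (-y)]) n₂
    have hA2 : Real.exp ((n₁:ℝ) * x) ≤ Real.exp ((c₁ * T) * x) := by
      apply Real.exp_le_exp.mpr
      exact mul_le_mul_of_nonneg_right (Nat.floor_le (by positivity)) hx0
    have hB2 : Real.exp ((n₂:ℝ) * (-y)) ≤ Real.exp ((c₂ * T - 1) * (-y)) := by
      apply Real.exp_le_exp.mpr
      have : c₂ * (T:ℝ) - 1 ≤ (n₂:ℝ) := le_of_lt (Nat.sub_one_lt_floor _)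
      nlinarith
    have hTk : ((T:ℝ)) ^ k = Real.exp ((k:ℝ) * Real.log T) := by
      rw [Real.exp_nat_mul, Real.exp_log hT0]
    calc (T : ℝ) ^ k * (1 + x) ^ n₁ * (1 - y) ^ n₂
        ≤ (T : ℝ) ^ k * Real.exp ((c₁ * T) * x) * Real.exp ((c₂ * T - 1) * (-y)) := by
          apply mul_le_mul
          · apply mul_le_mul_of_nonneg_left (hA.trans hA2) (by positivity)
          · exact hBle.trans hB2
          · exact pow_nonneg (by linarith) n₂
          · positivity
      _ = Real.exp ((k : ℝ) * Real.log (T:ℝ) + a * (c₁ * (T:ℝ)) / (T:ℝ) ^ α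
            - b * (c₂ * (T:ℝ) - 1) / (T:ℝ) ^ β) := by
          rw [hTk, ← Real.exp_add, ← Real.exp_add]
          congr 1
          rw [hxdef, hydef]
          field_simp
          ring
end

section
/- Let (ε_t)_{t≥1} be i.i.d. real random variables with mean 0, variance σ² > 0, and finite fourth moment. Let b > 0, 0 < β < 1, and for T ∈ ℕ define y_{T,0} = 0 and y_{T,t} = (1 − b/T^β)·y_{T,t−1} + ε_t for t ≥ 1. Then (1/T)·∑_{t=1}^{T} (y_{T,t} − y_{T,t−1})² converges in probability to σ² as T → ∞. -/
open MeasureTheory ProbabilityTheory Filter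

private lemma l2_mul_integrable {Ω : Type*} [MeasurableSpace Ω] {P : Measure Ω}
    {f g : Ω → ℝ} (hf : MemLp f 2 P) (hg : MemLp g 2 P) :
    Integrable (fun ω => f ω * g ω) P := by
  refine Integrable.mono' ((hf.integrable_sq.add hg.integrable_sq).const_mul (1/2))
    (hf.aestronglyMeasurable.mul hg.aestronglyMeasurable) ?_
  filter_upwards with ω
  rw [Real.norm_eq_abs, abs_mul]
  simp only [Pi.add_apply]
  nlinarith [sq_nonneg (|f ω| - |g ω|), sq_abs (f ω), sq_abs (g ω),
    abs_nonneg (f ω), abs_nonneg (g ω)]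

private lemma geom_sum_le_inv_sub {r : ℝ} (h0 : 0 ≤ r) (h1 : r < 1) (n : ℕ) :
    ∑ j ∈ Finset.range n, r ^ j ≤ 1 / (1 - r) := by
  have hr1 : r ≠ 1 := ne_of_lt h1
  have hpos : 0 < 1 - r := by linarith
  rw [geom_sum_eq hr1]
  have h2 : (r ^ n - 1) / (r - 1) = (1 - r ^ n) / (1 - r) := by
    rw [div_eq_div_iff (by linarith) (by linarith)]; ring
  rw [h2, div_le_div_iff₀ hpos hpos]
  nlinarith [pow_nonneg h0 n]

private lemma sum_Icc_one_eq_range {M : Type*} [AddCommMonoid M] (f : ℕ → M) (T : ℕ) :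
    ∑ t ∈ Finset.Icc 1 T, f t = ∑ i ∈ Finset.range T, f (i + 1) := by
  induction T with
  | zero => simp
  | succ T ih =>
    rw [Finset.sum_Icc_succ_top (by omega), ih, Finset.sum_range_succ]

set_option maxHeartbeats 1000000 in
/-- The averaged squared increments of the collapsing-regime process
`y_{T,t} = (1 − b/T^β) y_{T,t−1} + ε_t`, `y_{T,0} = 0`, built from i.i.d. innovations with
mean `0`, variance `σ² > 0` and finite fourth moment, converge in probability to `σ²`:
`(1/T) ∑_{t=1}^T (y_{T,t} − y_{T,t−1})² →p σ²`. -/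
theorem stmt12 {Ω : Type*} [MeasurableSpace Ω] (P : Measure Ω) [IsProbabilityMeasure P]
    (ε : ℕ → Ω → ℝ) (σ : ℝ) (hσ : 0 < σ)
    (hindep : iIndepFun ε P)
    (hident : ∀ i j, IdentDistrib (ε i) (ε j) P P)
    (hmean : ∀ i, ∫ ω, ε i ω ∂P = 0)
    (hvar : ∀ i, ∫ ω, (ε i ω) ^ 2 ∂P = σ ^ 2)
    (h4 : ∀ i, MemLp (ε i) 4 P)
    (b β : ℝ) (hb : 0 < b) (hβ0 : 0 < β) (hβ1 : β < 1)
    (y : ℕ → ℕ → Ω → ℝ)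
    (hy0 : ∀ T ω, y T 0 ω = 0)
    (hyrec : ∀ T t ω, y T (t + 1) ω = (1 - b / (T : ℝ) ^ β) * y T t ω + ε (t + 1) ω) :
    ∀ δ : ℝ, 0 < δ →
      Tendsto
        (fun T : ℕ =>
          P {ω | δ <
            |(1 / (T : ℝ)) * ∑ t ∈ Finset.Icc 1 T, (y T t ω - y T (t - 1) ω) ^ 2 - σ ^ 2|})
        atTop (nhds 0) := by
  intro δ hδ
  have hε2 : ∀ i, MemLp (ε i) 2 P := fun i =>
    (h4 i).mono_exponent (by norm_num)
  -- closed form for y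
  have hcf : ∀ T t, ∀ ω, y T t ω =
      ∑ k ∈ Finset.range t, (1 - b / (T : ℝ) ^ β) ^ k * ε (t - k) ω := by
    intro T t
    induction t with
    | zero => intro ω; simp [hy0]
    | succ t ih =>
      intro ω
      rw [hyrec, ih ω, Finset.sum_range_succ']
      have hsub : ∀ k : ℕ, t + 1 - (k + 1) = t - k := fun k => by omega
      simp only [hsub, pow_zero, one_mul, Nat.sub_zero]
      rw [Finset.mul_sum, add_left_inj]
      exact Finset.sum_congr rfl fun k _ => by ring
  -- L² membership of y
  have hyL2 : ∀ T t, MemLp (y T t) 2 P := by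
    intro T t
    have hfun : y T t = fun ω =>
        ∑ k ∈ Finset.range t, (1 - b / (T : ℝ) ^ β) ^ k * ε (t - k) ω :=
      funext (hcf T t)
    have h := memLp_finset_sum' (μ := P) (p := 2) (Finset.range t)
      (f := fun k => fun ω => (1 - b / (T : ℝ) ^ β) ^ k * ε (t - k) ω)
      (fun k _ => (hε2 (t - k)).const_mul _)
    rw [hfun]
    convert h using 1
    funext ω
    simp [Finset.sum_apply]
  -- cross moment vanishes
  have hcross : ∀ T t, ∫ ω, y T t ω * ε (t + 1) ω ∂P = 0 := by
    intro T t
    have hrw : ∀ ω, y T t ω * ε (t + 1) ω =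
        ∑ k ∈ Finset.range t,
          (1 - b / (T : ℝ) ^ β) ^ k * (ε (t - k) ω * ε (t + 1) ω) := by
      intro ω
      rw [hcf T t ω, Finset.sum_mul]
      exact Finset.sum_congr rfl fun k _ => by ring
    rw [integral_congr_ae (Filter.Eventually.of_forall hrw)]
    rw [integral_finset_sum _ fun k _ =>
      (l2_mul_integrable (hε2 (t - k)) (hε2 (t + 1))).const_mul _]
    refine Finset.sum_eq_zero fun k hk => ?_
    rw [integral_const_mul]
    have hne : t - k ≠ t + 1 := by omega
    have hmul : ∫ ω, ε (t - k) ω * ε (t + 1) ω ∂P = _ := (hindep.indepFun hne).integral_mul_eq_mul_integral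
      (hε2 (t - k)).aestronglyMeasurable (hε2 (t + 1)).aestronglyMeasurable
    rw [hmul, hmean, hmean, mul_zero, mul_zero]
  -- second moment of y
  have hEy2 : ∀ T t, ∫ ω, (y T t ω) ^ 2 ∂P =
      σ ^ 2 * ∑ j ∈ Finset.range t, ((1 - b / (T : ℝ) ^ β) ^ 2) ^ j := by
    intro T t
    induction t with
    | zero => simp [hy0]
    | succ t ih =>
      have I1 : Integrable (fun ω => (1 - b / (T : ℝ) ^ β) ^ 2 * (y T t ω) ^ 2) P :=
        (hyL2 T t).integrable_sq.const_mul _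
      have I2 : Integrable
          (fun ω => (2 * (1 - b / (T : ℝ) ^ β)) * (y T t ω * ε (t + 1) ω)) P :=
        (l2_mul_integrable (hyL2 T t) (hε2 (t + 1))).const_mul _
      have I3 : Integrable (fun ω => (ε (t + 1) ω) ^ 2) P := (hε2 (t + 1)).integrable_sq
      have I23 : Integrable (fun ω =>
          (2 * (1 - b / (T : ℝ) ^ β)) * (y T t ω * ε (t + 1) ω) + (ε (t + 1) ω) ^ 2) P :=
        I2.add I3
      have hexp : ∀ ω, (y T (t + 1) ω) ^ 2 =
          (1 - b / (T : ℝ) ^ β) ^ 2 * (y T t ω) ^ 2 +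
            ((2 * (1 - b / (T : ℝ) ^ β)) * (y T t ω * ε (t + 1) ω) + (ε (t + 1) ω) ^ 2) := by
        intro ω; rw [hyrec]; ring
      rw [integral_congr_ae (Filter.Eventually.of_forall hexp),
        integral_add I1 I23, integral_add I2 I3,
        integral_const_mul, integral_const_mul, ih, hcross, hvar, geom_sum_succ]
      generalize (∑ j ∈ Finset.range t, ((1 - b / (T : ℝ) ^ β) ^ 2) ^ j) = G
      ring
  -- the error process R
  set R : ℕ → Ω → ℝ := fun T ω =>
    (1 / (T : ℝ)) * ∑ t ∈ Finset.Icc 1 T, ((y T t ω - y T (t - 1) ω) ^ 2 - (ε t ω) ^ 2)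
    with hR
  have hincL2 : ∀ T t, MemLp (fun ω => y T t ω - y T (t - 1) ω) 2 P :=
    fun T t => (hyL2 T t).sub (hyL2 T (t - 1))
  have hRsummand_int : ∀ T t, Integrable
      (fun ω => (y T t ω - y T (t - 1) ω) ^ 2 - (ε t ω) ^ 2) P :=
    fun T t => ((hincL2 T t).integrable_sq).sub (hε2 t).integrable_sq
  have hRint : ∀ T, Integrable (R T) P := fun T =>
    (integrable_finset_sum _ fun t _ => hRsummand_int T t).const_mul _
  -- increments
  have hinc : ∀ T t ω, 1 ≤ t →
      y T t ω - y T (t - 1) ω = ε t ω - (b / (T : ℝ) ^ β) * y T (t - 1) ω := by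
    intro T t ω ht
    obtain ⟨s, rfl⟩ : ∃ s, t = s + 1 := ⟨t - 1, by omega⟩
    simp only [Nat.add_sub_cancel]
    rw [hyrec]
    ring
  -- the deterministic bound D
  set D : ℕ → ℝ := fun T =>
    σ ^ 2 * (b + 1) / (T : ℝ) ^ (β / 2) + σ ^ 2 * b / (T : ℝ) ^ β with hD
  -- key bound on the L¹ norm of R T, for large T
  have hkey : ∀ T : ℕ, 1 ≤ T → b < (T : ℝ) ^ β →
      ∫ ω, |R T ω| ∂P ≤ D T := by
    intro T hT1 hTb
    have hTpos : (0 : ℝ) < (T : ℝ) := by exact_mod_cast hT1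
    have hXpos : (0 : ℝ) < (T : ℝ) ^ β := lt_trans hb hTb
    have hLpos : (0 : ℝ) < (T : ℝ) ^ (β / 2) := Real.rpow_pos_of_pos hTpos _
    have hLX : ((T : ℝ) ^ (β / 2)) ^ 2 = (T : ℝ) ^ β := by
      rw [← Real.rpow_natCast ((T : ℝ) ^ (β / 2)) 2, ← Real.rpow_mul hTpos.le]
      norm_num
    have hcpos : 0 < b / (T : ℝ) ^ β := div_pos hb hXpos
    have hc1 : b / (T : ℝ) ^ β < 1 := (div_lt_one hXpos).mpr hTb
    have hφ0 : 0 ≤ 1 - b / (T : ℝ) ^ β := by linarith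
    have hφ1 : 1 - b / (T : ℝ) ^ β < 1 := by linarith
    -- second moment bound
    have hy2bound : ∀ s, ∫ ω, (y T s ω) ^ 2 ∂P ≤ σ ^ 2 * ((T : ℝ) ^ β / b) := by
      intro s
      rw [hEy2 T s]
      have hsq0 : 0 ≤ (1 - b / (T : ℝ) ^ β) ^ 2 := sq_nonneg _
      have hsq1 : (1 - b / (T : ℝ) ^ β) ^ 2 < 1 := by nlinarith
      have hgeom := geom_sum_le_inv_sub hsq0 hsq1 s
      have h1 : 1 / (1 - (1 - b / (T : ℝ) ^ β) ^ 2) ≤ (T : ℝ) ^ β / b := by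
        rw [div_le_div_iff₀ (by nlinarith) hb]
        have hbb : b / (T : ℝ) ^ β * (T : ℝ) ^ β = b := by field_simp
        nlinarith
      have hσ2 : (0:ℝ) ≤ σ ^ 2 := sq_nonneg σ
      calc σ ^ 2 * ∑ j ∈ Finset.range s, ((1 - b / (T : ℝ) ^ β) ^ 2) ^ j
          ≤ σ ^ 2 * (1 / (1 - (1 - b / (T : ℝ) ^ β) ^ 2)) :=
            mul_le_mul_of_nonneg_left hgeom hσ2
        _ ≤ σ ^ 2 * ((T : ℝ) ^ β / b) := mul_le_mul_of_nonneg_left h1 hσ2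
    -- bound on E |ε_t y_s|
    have habs : ∀ t s, ∫ ω, |ε t ω * y T s ω| ∂P ≤
        (((T : ℝ) ^ (β / 2)) ^ 2 * σ ^ 2 + σ ^ 2 * ((T : ℝ) ^ β / b)) /
          (2 * (T : ℝ) ^ (β / 2)) := by
      intro t s
      have hptwise : ∀ ω, |ε t ω * y T s ω| ≤
          (((T : ℝ) ^ (β / 2)) ^ 2 * (ε t ω) ^ 2 + (y T s ω) ^ 2) /
            (2 * (T : ℝ) ^ (β / 2)) := by
        intro ω
        rw [le_div_iff₀ (by positivity), abs_mul]
        nlinarith [sq_nonneg ((T : ℝ) ^ (β / 2) * |ε t ω| - |y T s ω|),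
          abs_nonneg (ε t ω), abs_nonneg (y T s ω), sq_abs (ε t ω), sq_abs (y T s ω)]
      have hint1 : Integrable (fun ω => |ε t ω * y T s ω|) P :=
        (l2_mul_integrable (hε2 t) (hyL2 T s)).abs
      have hint2a : Integrable
          (fun ω => ((T : ℝ) ^ (β / 2)) ^ 2 * (ε t ω) ^ 2) P :=
        (hε2 t).integrable_sq.const_mul _
      have hint2b : Integrable (fun ω =>
          ((T : ℝ) ^ (β / 2)) ^ 2 * (ε t ω) ^ 2 + (y T s ω) ^ 2) P :=
        hint2a.add (hyL2 T s).integrable_sq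
      have hint2 : Integrable (fun ω =>
          (((T : ℝ) ^ (β / 2)) ^ 2 * (ε t ω) ^ 2 + (y T s ω) ^ 2) /
            (2 * (T : ℝ) ^ (β / 2))) P := hint2b.div_const _
      calc ∫ ω, |ε t ω * y T s ω| ∂P
          ≤ ∫ ω, (((T : ℝ) ^ (β / 2)) ^ 2 * (ε t ω) ^ 2 + (y T s ω) ^ 2) /
              (2 * (T : ℝ) ^ (β / 2)) ∂P :=
            integral_mono hint1 hint2 hptwise
        _ = (((T : ℝ) ^ (β / 2)) ^ 2 * σ ^ 2 + ∫ ω, (y T s ω) ^ 2 ∂P) /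
              (2 * (T : ℝ) ^ (β / 2)) := by
            rw [integral_div, integral_add hint2a (hyL2 T s).integrable_sq,
              integral_const_mul, hvar]
        _ ≤ (((T : ℝ) ^ (β / 2)) ^ 2 * σ ^ 2 + σ ^ 2 * ((T : ℝ) ^ β / b)) /
              (2 * (T : ℝ) ^ (β / 2)) := by
            gcongr
            exact hy2bound s
    -- per-term L¹ bound
    have hterm : ∀ t ∈ Finset.Icc 1 T,
        ∫ ω, |(y T t ω - y T (t - 1) ω) ^ 2 - (ε t ω) ^ 2| ∂P ≤ D T := by
      intro t ht
      rw [Finset.mem_Icc] at ht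
      have hrw : ∀ ω, (y T t ω - y T (t - 1) ω) ^ 2 - (ε t ω) ^ 2 =
          (b / (T : ℝ) ^ β) ^ 2 * (y T (t - 1) ω) ^ 2 -
            (2 * (b / (T : ℝ) ^ β)) * (ε t ω * y T (t - 1) ω) := by
        intro ω; rw [hinc T t ω ht.1]; ring
      have hptw : ∀ ω, |(y T t ω - y T (t - 1) ω) ^ 2 - (ε t ω) ^ 2| ≤
          (b / (T : ℝ) ^ β) ^ 2 * (y T (t - 1) ω) ^ 2 +
            (2 * (b / (T : ℝ) ^ β)) * |ε t ω * y T (t - 1) ω| := by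
        intro ω
        rw [hrw ω]
        refine (abs_sub _ _).trans ?_
        have h1 : |(b / (T : ℝ) ^ β) ^ 2 * (y T (t - 1) ω) ^ 2| =
            (b / (T : ℝ) ^ β) ^ 2 * (y T (t - 1) ω) ^ 2 :=
          abs_of_nonneg (by positivity)
        have h2 : |(2 * (b / (T : ℝ) ^ β)) * (ε t ω * y T (t - 1) ω)| =
            (2 * (b / (T : ℝ) ^ β)) * |ε t ω * y T (t - 1) ω| := by
          rw [abs_mul, abs_of_nonneg (by positivity)]
        rw [h1, h2]
      have hIa : Integrable (fun ω =>
          (b / (T : ℝ) ^ β) ^ 2 * (y T (t - 1) ω) ^ 2) P :=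
        (hyL2 T (t - 1)).integrable_sq.const_mul _
      have hIb : Integrable (fun ω =>
          (2 * (b / (T : ℝ) ^ β)) * |ε t ω * y T (t - 1) ω|) P :=
        ((l2_mul_integrable (hε2 t) (hyL2 T (t - 1))).abs).const_mul _
      have hIab : Integrable (fun ω =>
          (b / (T : ℝ) ^ β) ^ 2 * (y T (t - 1) ω) ^ 2 +
            (2 * (b / (T : ℝ) ^ β)) * |ε t ω * y T (t - 1) ω|) P := hIa.add hIb
      calc ∫ ω, |(y T t ω - y T (t - 1) ω) ^ 2 - (ε t ω) ^ 2| ∂P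
          ≤ ∫ ω, ((b / (T : ℝ) ^ β) ^ 2 * (y T (t - 1) ω) ^ 2 +
              (2 * (b / (T : ℝ) ^ β)) * |ε t ω * y T (t - 1) ω|) ∂P :=
            integral_mono (hRsummand_int T t).abs hIab hptw
        _ = (b / (T : ℝ) ^ β) ^ 2 * ∫ ω, (y T (t - 1) ω) ^ 2 ∂P +
              (2 * (b / (T : ℝ) ^ β)) * ∫ ω, |ε t ω * y T (t - 1) ω| ∂P := by
            rw [integral_add hIa hIb, integral_const_mul, integral_const_mul]
        _ ≤ (b / (T : ℝ) ^ β) ^ 2 * (σ ^ 2 * ((T : ℝ) ^ β / b)) +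
              (2 * (b / (T : ℝ) ^ β)) *
                ((((T : ℝ) ^ (β / 2)) ^ 2 * σ ^ 2 + σ ^ 2 * ((T : ℝ) ^ β / b)) /
                  (2 * (T : ℝ) ^ (β / 2))) := by
            gcongr
            · exact hy2bound (t - 1)
            · exact habs t (t - 1)
        _ = D T := by
            simp only [hD]
            rw [← hLX]
            field_simp
            ring
    -- aggregate
    have hGint : Integrable (fun ω => (1 / (T : ℝ)) *
        ∑ t ∈ Finset.Icc 1 T, |(y T t ω - y T (t - 1) ω) ^ 2 - (ε t ω) ^ 2|) P :=
      (integrable_finset_sum _ fun t _ => (hRsummand_int T t).abs).const_mul _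
    have hptR : ∀ ω, |R T ω| ≤ (1 / (T : ℝ)) *
        ∑ t ∈ Finset.Icc 1 T, |(y T t ω - y T (t - 1) ω) ^ 2 - (ε t ω) ^ 2| := by
      intro ω
      rw [hR]
      simp only []
      rw [abs_mul, abs_of_nonneg (by positivity : (0:ℝ) ≤ 1 / (T : ℝ))]
      exact mul_le_mul_of_nonneg_left (Finset.abs_sum_le_sum_abs _ _) (by positivity)
    calc ∫ ω, |R T ω| ∂P
        ≤ ∫ ω, (1 / (T : ℝ)) *
            ∑ t ∈ Finset.Icc 1 T, |(y T t ω - y T (t - 1) ω) ^ 2 - (ε t ω) ^ 2| ∂P :=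
          integral_mono (hRint T).abs hGint hptR
      _ = (1 / (T : ℝ)) * ∑ t ∈ Finset.Icc 1 T,
            ∫ ω, |(y T t ω - y T (t - 1) ω) ^ 2 - (ε t ω) ^ 2| ∂P := by
          rw [integral_const_mul,
            integral_finset_sum _ fun t _ => (hRsummand_int T t).abs]
      _ ≤ (1 / (T : ℝ)) * ∑ _t ∈ Finset.Icc 1 T, D T :=
          mul_le_mul_of_nonneg_left (Finset.sum_le_sum hterm) (by positivity)
      _ = D T := by
          rw [Finset.sum_const, Nat.card_Icc]
          simp only [Nat.add_sub_cancel, nsmul_eq_mul]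
          field_simp
    done
  -- T^β and T^(β/2) tend to infinity
  have hpow1 : Tendsto (fun T : ℕ => ((T : ℝ)) ^ (β / 2)) atTop atTop :=
    (tendsto_rpow_atTop (by positivity)).comp tendsto_natCast_atTop_atTop
  have hpow2 : Tendsto (fun T : ℕ => ((T : ℝ)) ^ β) atTop atTop :=
    (tendsto_rpow_atTop hβ0).comp tendsto_natCast_atTop_atTop
  -- D tends to zero
  have hDlim : Tendsto D atTop (nhds 0) := by
    have h1 : Tendsto (fun T : ℕ => σ ^ 2 * (b + 1) / (T : ℝ) ^ (β / 2)) atTop (nhds 0) :=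
      Tendsto.div_atTop tendsto_const_nhds hpow1
    have h2 : Tendsto (fun T : ℕ => σ ^ 2 * b / (T : ℝ) ^ β) atTop (nhds 0) :=
      Tendsto.div_atTop tendsto_const_nhds hpow2
    simpa using h1.add h2
  -- the R part tends to zero in probability, by Markov
  have hRtend : Tendsto (fun T => P {ω | δ / 2 ≤ |R T ω|}) atTop (nhds 0) := by
    have hub : ∀ᶠ T in atTop,
        P {ω | δ / 2 ≤ |R T ω|} ≤ ENNReal.ofReal (D T / (δ / 2)) := by
      filter_upwards [eventually_ge_atTop 1, hpow2.eventually_gt_atTop b] with T hT1 hTb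
      have hmkv := mul_meas_ge_le_integral_of_nonneg
        (Filter.Eventually.of_forall fun ω => abs_nonneg (R T ω)) (hRint T).abs (δ / 2)
      have hkey' := hkey T hT1 hTb
      have hP : (P {ω | δ / 2 ≤ |R T ω|}).toReal ≤ D T / (δ / 2) := by
        rw [le_div_iff₀ (half_pos hδ)]
        calc (P {ω | δ / 2 ≤ |R T ω|}).toReal * (δ / 2)
            = δ / 2 * (P {ω | δ / 2 ≤ |R T ω|}).toReal := by ring
          _ ≤ ∫ ω, |R T ω| ∂P := hmkv
          _ ≤ D T := hkey'
      calc P {ω | δ / 2 ≤ |R T ω|}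
          = ENNReal.ofReal ((P {ω | δ / 2 ≤ |R T ω|}).toReal) :=
            (ENNReal.ofReal_toReal (measure_ne_top P _)).symm
        _ ≤ ENNReal.ofReal (D T / (δ / 2)) := ENNReal.ofReal_le_ofReal hP
    have hup : Tendsto (fun T => ENNReal.ofReal (D T / (δ / 2))) atTop (nhds 0) := by
      have h0 := hDlim.div_const (δ / 2)
      rw [zero_div] at h0
      have h1 := ENNReal.tendsto_ofReal h0
      rwa [ENNReal.ofReal_zero] at h1
    exact tendsto_of_tendsto_of_tendsto_of_le_of_le' tendsto_const_nhds hup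
      (Filter.Eventually.of_forall fun T => zero_le) hub
  -- the averaging process A
  set A : ℕ → Ω → ℝ := fun T ω => (1 / (T : ℝ)) * ∑ t ∈ Finset.Icc 1 T, (ε t ω) ^ 2
    with hA
  -- strong law of large numbers for the squared innovations
  have hsq_indep : iIndepFun (fun i ω => (ε i ω) ^ 2) P :=
    hindep.comp (fun _ => fun x : ℝ => x ^ 2) (fun _ => measurable_id.pow_const 2)
  have hsll : ∀ᵐ ω ∂P, Tendsto
      (fun n : ℕ => (∑ i ∈ Finset.range n, (ε (i + 1) ω) ^ 2) / n) atTop (nhds (σ ^ 2)) := by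
    have h := strong_law_ae_real (fun i ω => (ε (i + 1) ω) ^ 2)
      ((hε2 1).integrable_sq)
      (fun i j hij => hsq_indep.indepFun (by omega))
      (fun i => (hident (i + 1) 1).comp (measurable_id.pow_const 2))
    have hv : ∫ ω, (ε (0 + 1) ω) ^ 2 ∂P = σ ^ 2 := hvar 1
    rw [hv] at h
    exact h
  have hAae : ∀ᵐ ω ∂P, Tendsto (fun T : ℕ => A T ω) atTop (nhds (σ ^ 2)) := by
    filter_upwards [hsll] with ω hω
    refine hω.congr fun T => ?_
    rw [hA]
    simp only []
    rw [sum_Icc_one_eq_range (fun t => (ε t ω) ^ 2) T, one_div, inv_mul_eq_div]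
  have hAmeas : ∀ T, AEStronglyMeasurable (A T) P := fun T =>
    ((integrable_finset_sum _ fun t _ => (hε2 t).integrable_sq).const_mul _).aestronglyMeasurable
  have hAten := (tendstoInMeasure_iff_dist.mp (tendstoInMeasure_of_tendsto_ae hAmeas hAae)) (δ / 2) (half_pos hδ)
  -- event inclusion
  have hsub : ∀ T : ℕ,
      {ω | δ < |(1 / (T : ℝ)) * ∑ t ∈ Finset.Icc 1 T,
        (y T t ω - y T (t - 1) ω) ^ 2 - σ ^ 2|} ⊆
      {ω | δ / 2 ≤ dist (A T ω) (σ ^ 2)} ∪ {ω | δ / 2 ≤ |R T ω|} := by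
    intro T ω hω
    simp only [Set.mem_setOf_eq] at hω
    by_contra hcon
    simp only [Set.mem_union, Set.mem_setOf_eq, not_or, not_le] at hcon
    obtain ⟨h1, h2⟩ := hcon
    rw [Real.dist_eq] at h1
    have hSA : (1 / (T : ℝ)) * ∑ t ∈ Finset.Icc 1 T,
        (y T t ω - y T (t - 1) ω) ^ 2 - σ ^ 2 = R T ω + (A T ω - σ ^ 2) := by
      have hsum : R T ω + A T ω = (1 / (T : ℝ)) * ∑ t ∈ Finset.Icc 1 T,
          (y T t ω - y T (t - 1) ω) ^ 2 := by
        rw [hR, hA]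
        simp only []
        rw [← mul_add, ← Finset.sum_add_distrib]
        congr 1
        exact Finset.sum_congr rfl fun t _ => by ring
      linarith
    rw [hSA] at hω
    have htri := abs_add_le (R T ω) (A T ω - σ ^ 2)
    linarith
  -- combine
  have hupper : Tendsto (fun T =>
      P {ω | δ / 2 ≤ dist (A T ω) (σ ^ 2)} + P {ω | δ / 2 ≤ |R T ω|}) atTop (nhds 0) := by
    simpa using hAten.add hRtend
  refine tendsto_of_tendsto_of_tendsto_of_le_of_le' tendsto_const_nhds hupper
    (Filter.Eventually.of_forall fun T => zero_le)
    (Filter.Eventually.of_forall fun T => ?_)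
  exact (measure_mono (hsub T)).trans (measure_union_le _ _)
end

section
/- Let (ε_t)_{t≥1} be i.i.d. real random variables with mean 0 and variance σ² > 0. Let a > 0, 0 < α < 1, c > 0, and for T ∈ ℕ set φ_T = 1 + a/T^α, n_T = ⌊cT⌋, y_{T,0} = 0 and y_{T,t} = φ_T·y_{T,t−1} + ε_t for t ≥ 1. Then ∑_{t=1}^{n_T} y_{T,t−1} ε_t is of stochastic order T^{(α+1)/2} φ_T^{n_T}: for every δ > 0 there exists M > 0 such that for all sufficiently large T, P(|∑_{t=1}^{n_T} y_{T,t−1} ε_t| > M·T^{(α+1)/2}·φ_T^{n_T}) < δ. -/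
open MeasureTheory ProbabilityTheory Filter

section Stmt15Aux

variable {Ω : Type*} [MeasurableSpace Ω] {P : Measure Ω}

noncomputable def stmt15Y (ε : ℕ → Ω → ℝ) (φ : ℝ) (t : ℕ) (ω : Ω) : ℝ :=
  ∑ j ∈ Finset.Icc 1 t, φ ^ (t - j) * ε j ω

noncomputable def stmt15S (ε : ℕ → Ω → ℝ) (φ : ℝ) (n : ℕ) (ω : Ω) : ℝ :=
  ∑ t ∈ Finset.Icc 1 n, stmt15Y ε φ (t - 1) ω * ε t ω

lemma stmt15Y_succ (ε : ℕ → Ω → ℝ) (φ : ℝ) (t : ℕ) (ω : Ω) :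
    stmt15Y ε φ (t + 1) ω = φ * stmt15Y ε φ t ω + ε (t + 1) ω := by
  unfold stmt15Y
  rw [Finset.sum_Icc_succ_top (Nat.le_add_left 1 t)]
  simp only [Nat.sub_self, pow_zero, one_mul]
  congr 1
  rw [Finset.mul_sum]
  refine Finset.sum_congr rfl fun j hj => ?_
  have hj' : j ≤ t := (Finset.mem_Icc.1 hj).2
  rw [show t + 1 - j = (t - j) + 1 from by omega, pow_succ']
  ring

lemma stmt15S_succ (ε : ℕ → Ω → ℝ) (φ : ℝ) (n : ℕ) (ω : Ω) :
    stmt15S ε φ (n + 1) ω = stmt15S ε φ n ω + stmt15Y ε φ n ω * ε (n + 1) ω := by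
  unfold stmt15S
  rw [Finset.sum_Icc_succ_top (Nat.le_add_left 1 n)]
  simp

theorem stmt15_moments [IsProbabilityMeasure P] (ε : ℕ → Ω → ℝ) (σ : ℝ)
    (hmeas : ∀ i, Measurable (ε i))
    (hindep : iIndepFun ε P)
    (hmean : ∀ i, ∫ ω, ε i ω ∂P = 0)
    (hvar : ∀ i, ∫ ω, (ε i ω) ^ 2 ∂P = σ ^ 2)
    (hL2 : ∀ i, MemLp (ε i) 2 P) (φ : ℝ) (n : ℕ) :
    MemLp (stmt15S ε φ n) 2 P ∧ (∫ ω, stmt15S ε φ n ω ∂P) = 0 ∧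
      (∫ ω, (stmt15S ε φ n ω) ^ 2 ∂P) =
        σ ^ 2 * ∑ t ∈ Finset.range n, σ ^ 2 * ∑ j ∈ Finset.range t, (φ ^ 2) ^ j := by
  -- basic facts
  have hεint : ∀ i, Integrable (ε i) P := fun i => (hL2 i).integrable one_le_two
  have hYmeas : ∀ t, Measurable (stmt15Y ε φ t) := fun t =>
    Finset.measurable_sum _ fun j _ => (hmeas j).const_mul _
  have hYL2 : ∀ t, MemLp (stmt15Y ε φ t) 2 P := fun t =>
    memLp_finsetSum _ fun j _ => ((hL2 j).const_mul _)
  have hSmeas : ∀ n, Measurable (stmt15S ε φ n) := fun n =>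
    Finset.measurable_sum _ fun t _ => (hYmeas (t - 1)).mul (hmeas t)
  -- σ-algebra machinery
  set F : ℕ → MeasurableSpace Ω :=
    fun k => ⨆ i ∈ Set.Iic k, MeasurableSpace.comap (ε i) inferInstance with hF
  have hεF : ∀ k j, j ≤ k → Measurable[F k] (ε j) := fun k j hjk =>
    Measurable.of_comap_le (le_biSup (f := fun i => MeasurableSpace.comap (ε i) inferInstance)
      (Set.mem_Iic.2 hjk))
  have hYF : ∀ k t, t ≤ k → Measurable[F k] (stmt15Y ε φ t) := by
    intro k t ht
    refine Finset.measurable_sum _ fun j hj => ?_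
    exact (hεF k j (le_trans (Finset.mem_Icc.1 hj).2 ht)).const_mul _
  have hSF : ∀ k m, m ≤ k → Measurable[F k] (stmt15S ε φ m) := by
    intro k m hm
    refine Finset.measurable_sum _ fun t ht => ?_
    have htk : t ≤ k := le_trans (Finset.mem_Icc.1 ht).2 hm
    exact (hYF k (t - 1) (le_trans (Nat.sub_le t 1) htk)).mul (hεF k t htk)
  have hindepF : ∀ k (X : Ω → ℝ), Measurable[F k] X → IndepFun X (ε (k + 1)) P := by
    intro k X hX
    have h1 := indep_biSup_compl (fun i => (hmeas i).comap_le) hindep.iIndep (Set.Iic k)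
    have h2 : Indep (F k) (MeasurableSpace.comap (ε (k + 1)) inferInstance) P :=
      indep_of_indep_of_le_right h1
        (le_biSup (f := fun i => MeasurableSpace.comap (ε i) inferInstance)
          (by simp : (k + 1) ∈ (Set.Iic k)ᶜ))
    rw [IndepFun_iff_Indep]
    exact indep_of_indep_of_le_left h2 hX.comap_le
  -- vanishing cross moments
  have hcross : ∀ (m k : ℕ), m ≤ k → ∀ (X : Ω → ℝ), Measurable[F m] X → Integrable X P →
      ∫ ω, X ω * ε (k + 1) ω ∂P = 0 := by
    intro m k hk X hX hXint
    have hXk : Measurable[F k] X :=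
      hX.mono (biSup_mono fun i (hi : i ∈ Set.Iic m) => le_trans hi hk) le_rfl
    have h := (hindepF k X hXk).integral_fun_mul_eq_mul_integral hXint.aestronglyMeasurable
      (hεint (k + 1)).aestronglyMeasurable
    calc ∫ ω, X ω * ε (k + 1) ω ∂P = (∫ ω, X ω ∂P) * ∫ ω, ε (k + 1) ω ∂P := h
      _ = 0 := by rw [hmean (k + 1)]; ring
  -- second moments of Y
  have hY2 : ∀ t, ∫ ω, (stmt15Y ε φ t ω) ^ 2 ∂P
      = σ ^ 2 * ∑ j ∈ Finset.range t, (φ ^ 2) ^ j := by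
    intro t
    induction t with
    | zero => simp [stmt15Y]
    | succ t ih =>
      have h1 : Integrable (fun ω => (stmt15Y ε φ t ω) ^ 2) P := (hYL2 t).integrable_sq
      have h2 : Integrable (fun ω => stmt15Y ε φ t ω * ε (t + 1) ω) P :=
        (hindepF t _ (hYF t t le_rfl)).integrable_mul ((hYL2 t).integrable one_le_two)
          (hεint (t + 1))
      have h3 : Integrable (fun ω => (ε (t + 1) ω) ^ 2) P := (hL2 (t + 1)).integrable_sq
      have hI1 : Integrable (fun ω => φ ^ 2 * (stmt15Y ε φ t ω) ^ 2) P := h1.const_mul _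
      have hI2 : Integrable (fun ω => (2 * φ) * (stmt15Y ε φ t ω * ε (t + 1) ω)) P :=
        h2.const_mul _
      have hI12 : Integrable (fun ω => φ ^ 2 * (stmt15Y ε φ t ω) ^ 2
          + (2 * φ) * (stmt15Y ε φ t ω * ε (t + 1) ω)) P := hI1.add hI2
      have hYe : ∫ ω, stmt15Y ε φ t ω * ε (t + 1) ω ∂P = 0 :=
        hcross t t le_rfl _ (hYF t t le_rfl) ((hYL2 t).integrable one_le_two)
      calc ∫ ω, (stmt15Y ε φ (t + 1) ω) ^ 2 ∂P
          = ∫ ω, (φ ^ 2 * (stmt15Y ε φ t ω) ^ 2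
              + (2 * φ) * (stmt15Y ε φ t ω * ε (t + 1) ω)) + (ε (t + 1) ω) ^ 2 ∂P :=
            integral_congr_ae (Filter.Eventually.of_forall fun ω => by
              dsimp only; rw [stmt15Y_succ]; ring)
        _ = (∫ ω, φ ^ 2 * (stmt15Y ε φ t ω) ^ 2
              + (2 * φ) * (stmt15Y ε φ t ω * ε (t + 1) ω) ∂P) + ∫ ω, (ε (t + 1) ω) ^ 2 ∂P :=
            integral_add hI12 h3
        _ = ((∫ ω, φ ^ 2 * (stmt15Y ε φ t ω) ^ 2 ∂P)
              + ∫ ω, (2 * φ) * (stmt15Y ε φ t ω * ε (t + 1) ω) ∂P) + σ ^ 2 := by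
            rw [integral_add hI1 hI2, hvar (t + 1)]
        _ = (φ ^ 2 * ∫ ω, (stmt15Y ε φ t ω) ^ 2 ∂P
              + (2 * φ) * ∫ ω, stmt15Y ε φ t ω * ε (t + 1) ω ∂P) + σ ^ 2 := by
            rw [integral_const_mul, integral_const_mul]
        _ = σ ^ 2 * ∑ j ∈ Finset.range (t + 1), (φ ^ 2) ^ j := by
            rw [ih, hYe, geom_sum_succ]; ring
  -- induction for S
  induction n with
  | zero =>
    refine ⟨?_, ?_, ?_⟩
    · have h0 : stmt15S ε φ 0 = fun _ => (0 : ℝ) := funext fun ω => by simp [stmt15S]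
      rw [h0]; exact memLp_const 0
    · simp [stmt15S]
    · simp [stmt15S]
  | succ n ih =>
    obtain ⟨hSL2, hSmean, hSvar⟩ := ih
    have hZind : IndepFun (stmt15Y ε φ n) (ε (n + 1)) P := hindepF n _ (hYF n n le_rfl)
    have hZsqind : IndepFun (fun ω => (stmt15Y ε φ n ω) ^ 2) (fun ω => (ε (n + 1) ω) ^ 2) P :=
      hZind.comp (measurable_id.pow_const 2) (measurable_id.pow_const 2)
    have hZsqint : Integrable (fun ω => (stmt15Y ε φ n ω) ^ 2 * (ε (n + 1) ω) ^ 2) P :=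
      hZsqind.integrable_mul ((hYL2 n).integrable_sq) ((hL2 (n + 1)).integrable_sq)
    have hZL2 : MemLp (fun ω => stmt15Y ε φ n ω * ε (n + 1) ω) 2 P := by
      refine (memLp_two_iff_integrable_sq
        (((hYmeas n).mul (hmeas (n + 1))).aestronglyMeasurable)).2 ?_
      simpa [mul_pow] using hZsqint
    have hZint : Integrable (fun ω => stmt15Y ε φ n ω * ε (n + 1) ω) P :=
      hZL2.integrable one_le_two
    have hZmean : ∫ ω, stmt15Y ε φ n ω * ε (n + 1) ω ∂P = 0 :=
      hcross n n le_rfl _ (hYF n n le_rfl) ((hYL2 n).integrable one_le_two)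
    have hSL2' : MemLp (stmt15S ε φ (n + 1)) 2 P := by
      have hrec : stmt15S ε φ (n + 1)
          = fun ω => stmt15S ε φ n ω + stmt15Y ε φ n ω * ε (n + 1) ω :=
        funext fun ω => stmt15S_succ ε φ n ω
      rw [hrec]; exact hSL2.add hZL2
    refine ⟨hSL2', ?_, ?_⟩
    · calc ∫ ω, stmt15S ε φ (n + 1) ω ∂P
          = ∫ ω, stmt15S ε φ n ω + stmt15Y ε φ n ω * ε (n + 1) ω ∂P :=
            integral_congr_ae (Filter.Eventually.of_forall fun ω => by dsimp only; rw [stmt15S_succ])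
        _ = (∫ ω, stmt15S ε φ n ω ∂P) + ∫ ω, stmt15Y ε φ n ω * ε (n + 1) ω ∂P :=
            integral_add (hSL2.integrable one_le_two) hZint
        _ = 0 := by rw [hSmean, hZmean, add_zero]
    · have hSYint : Integrable (fun ω => stmt15S ε φ n ω * stmt15Y ε φ n ω) P := by
        have h := (hYL2 n).smul (φ := stmt15S ε φ n) hSL2 (r := 1)
        exact memLp_one_iff_integrable.1 h
      have hXc : ∫ ω, (stmt15S ε φ n ω * stmt15Y ε φ n ω) * ε (n + 1) ω ∂P = 0 :=
        hcross n n le_rfl _ ((hSF n n le_rfl).mul (hYF n n le_rfl)) hSYint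
      have hcross0 : ∫ ω, stmt15S ε φ n ω * (stmt15Y ε φ n ω * ε (n + 1) ω) ∂P = 0 := by
        rw [← hXc]
        exact integral_congr_ae (Filter.Eventually.of_forall fun ω => by ring)
      have hZ2 : ∫ ω, (stmt15Y ε φ n ω * ε (n + 1) ω) ^ 2 ∂P
          = (σ ^ 2 * ∑ j ∈ Finset.range n, (φ ^ 2) ^ j) * σ ^ 2 := by
        have h := hZsqind.integral_fun_mul_eq_mul_integral ((hYL2 n).integrable_sq).aestronglyMeasurable
          ((hL2 (n + 1)).integrable_sq).aestronglyMeasurable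
        calc ∫ ω, (stmt15Y ε φ n ω * ε (n + 1) ω) ^ 2 ∂P
            = ∫ ω, (stmt15Y ε φ n ω) ^ 2 * (ε (n + 1) ω) ^ 2 ∂P :=
              integral_congr_ae (Filter.Eventually.of_forall fun ω => by dsimp only; rw [mul_pow])
          _ = (∫ ω, (stmt15Y ε φ n ω) ^ 2 ∂P) * ∫ ω, (ε (n + 1) ω) ^ 2 ∂P := h
          _ = (σ ^ 2 * ∑ j ∈ Finset.range n, (φ ^ 2) ^ j) * σ ^ 2 := by
              rw [hY2 n, hvar (n + 1)]
      have hSZint : Integrable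
          (fun ω => stmt15S ε φ n ω * (stmt15Y ε φ n ω * ε (n + 1) ω)) P := by
        have h := hZL2.smul (φ := stmt15S ε φ n) hSL2 (r := 1)
        exact memLp_one_iff_integrable.1 h
      have hSsqint : Integrable (fun ω => (stmt15S ε φ n ω) ^ 2) P := hSL2.integrable_sq
      have hZZint : Integrable (fun ω => (stmt15Y ε φ n ω * ε (n + 1) ω) ^ 2) P :=
        hZL2.integrable_sq
      have hI2' : Integrable
          (fun ω => 2 * (stmt15S ε φ n ω * (stmt15Y ε φ n ω * ε (n + 1) ω))) P :=
        hSZint.const_mul _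
      have hI12 : Integrable (fun ω => (stmt15S ε φ n ω) ^ 2
          + 2 * (stmt15S ε φ n ω * (stmt15Y ε φ n ω * ε (n + 1) ω))) P := hSsqint.add hI2'
      calc ∫ ω, (stmt15S ε φ (n + 1) ω) ^ 2 ∂P
          = ∫ ω, ((stmt15S ε φ n ω) ^ 2
              + 2 * (stmt15S ε φ n ω * (stmt15Y ε φ n ω * ε (n + 1) ω)))
              + (stmt15Y ε φ n ω * ε (n + 1) ω) ^ 2 ∂P :=
            integral_congr_ae (Filter.Eventually.of_forall fun ω => by
              dsimp only; rw [stmt15S_succ]; ring)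
        _ = (∫ ω, (stmt15S ε φ n ω) ^ 2
              + 2 * (stmt15S ε φ n ω * (stmt15Y ε φ n ω * ε (n + 1) ω)) ∂P)
              + ∫ ω, (stmt15Y ε φ n ω * ε (n + 1) ω) ^ 2 ∂P := integral_add hI12 hZZint
        _ = ((∫ ω, (stmt15S ε φ n ω) ^ 2 ∂P)
              + ∫ ω, 2 * (stmt15S ε φ n ω * (stmt15Y ε φ n ω * ε (n + 1) ω)) ∂P)
              + (σ ^ 2 * ∑ j ∈ Finset.range n, (φ ^ 2) ^ j) * σ ^ 2 := by
            rw [integral_add hSsqint hI2', hZ2]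
        _ = σ ^ 2 * ∑ t ∈ Finset.range (n + 1), σ ^ 2 * ∑ j ∈ Finset.range t, (φ ^ 2) ^ j := by
            rw [integral_const_mul, hcross0, hSvar, Finset.sum_range_succ]
            ring

lemma stmt15_iIndepFun_of_ae_eq' {Ω : Type*} [MeasurableSpace Ω] {P : Measure Ω}
    {f g : ℕ → Ω → ℝ}
    (hf : iIndepFun f P)
    (h : ∀ i, f i =ᵐ[P] g i) : iIndepFun g P := by
  rw [iIndepFun_iff_measure_inter_preimage_eq_mul] at hf ⊢
  intro S sets hsets
  have hs : ∀ i, g i ⁻¹' sets i =ᵐ[P] f i ⁻¹' sets i := by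
    intro i
    filter_upwards [h i] with ω hω
    exact congrArg (fun z => z ∈ sets i) hω.symm
  have h1 : P (⋂ i ∈ S, g i ⁻¹' sets i) = P (⋂ i ∈ S, f i ⁻¹' sets i) := by
    refine measure_congr ?_
    have hall := ae_all_iff.2 fun i => h i
    filter_upwards [hall] with ω hω
    have hiff : (ω ∈ ⋂ i ∈ S, g i ⁻¹' sets i) ↔ (ω ∈ ⋂ i ∈ S, f i ⁻¹' sets i) := by
      simp only [Set.mem_iInter, Set.mem_preimage]
      constructor <;> intro H i hi
      · rw [hω i]; exact H i hi
      · rw [← hω i]; exact H i hi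
    exact propext hiff
  rw [h1, hf S hsets]
  exact Finset.prod_congr rfl fun i _ => (measure_congr (hs i)).symm

end Stmt15Aux

set_option maxHeartbeats 2000000 in
/-- In the mildly explosive regime `y_{T,t} = (1 + a/T^α) y_{T,t−1} + ε_t`, `y_{T,0} = 0`,
the martingale transform `∑_{t=1}^{⌊cT⌋} y_{T,t−1} ε_t` is of stochastic order
`T^{(α+1)/2} φ_T^{⌊cT⌋}`: for every `δ > 0` there is `M > 0` such that
`P(|∑_{t=1}^{⌊cT⌋} y_{T,t−1} ε_t| > M T^{(α+1)/2} φ_T^{⌊cT⌋}) < δ` for all large `T`. -/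
theorem stmt15 {Ω : Type*} [MeasurableSpace Ω] (P : Measure Ω) [IsProbabilityMeasure P]
    (ε : ℕ → Ω → ℝ) (σ : ℝ) (hσ : 0 < σ)
    (hindep : iIndepFun ε P)
    (hident : ∀ i j, IdentDistrib (ε i) (ε j) P P)
    (hmean : ∀ i, ∫ ω, ε i ω ∂P = 0)
    (hvar : ∀ i, ∫ ω, (ε i ω) ^ 2 ∂P = σ ^ 2)
    (hL2 : ∀ i, MemLp (ε i) 2 P)
    (a α c : ℝ) (ha : 0 < a) (hα0 : 0 < α) (hα1 : α < 1) (hc : 0 < c)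
    (y : ℕ → ℕ → Ω → ℝ)
    (hy0 : ∀ T ω, y T 0 ω = 0)
    (hyrec : ∀ T t ω, y T (t + 1) ω = (1 + a / (T : ℝ) ^ α) * y T t ω + ε (t + 1) ω) :
    ∀ δ : ℝ, 0 < δ → ∃ M : ℝ, 0 < M ∧
      ∀ᶠ T : ℕ in atTop,
        P {ω | M * (T : ℝ) ^ ((α + 1) / 2) * (1 + a / (T : ℝ) ^ α) ^ ⌊c * (T : ℝ)⌋₊ <
            |∑ t ∈ Finset.Icc 1 ⌊c * (T : ℝ)⌋₊, y T (t - 1) ω * ε t ω|} <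
          ENNReal.ofReal δ := by
  -- measurable modifications of the noise
  set ε' : ℕ → Ω → ℝ := fun i => (hL2 i).1.mk (ε i) with hε'def
  have hε'meas : ∀ i, Measurable (ε' i) := fun i =>
    (hL2 i).1.stronglyMeasurable_mk.measurable
  have hae : ∀ i, ε i =ᵐ[P] ε' i := fun i => (hL2 i).1.ae_eq_mk
  have hindep' : iIndepFun ε' P :=
    stmt15_iIndepFun_of_ae_eq' hindep hae
  have hmean' : ∀ i, ∫ ω, ε' i ω ∂P = 0 := fun i => by
    rw [← integral_congr_ae (hae i)]; exact hmean i
  have hvar' : ∀ i, ∫ ω, (ε' i ω) ^ 2 ∂P = σ ^ 2 := fun i => by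
    have hsq : (fun ω => (ε i ω) ^ 2) =ᵐ[P] fun ω => (ε' i ω) ^ 2 :=
      (hae i).mono fun ω h => by dsimp only; rw [h]
    rw [← integral_congr_ae hsq]; exact hvar i
  have hL2' : ∀ i, MemLp (ε' i) 2 P := fun i => (hL2 i).ae_eq (hae i)
  intro δ hδ
  have hK0 : 0 < σ ^ 4 * c / (2 * a) := by positivity
  set K : ℝ := σ ^ 4 * c / (2 * a) with hK_def
  set M : ℝ := 1 + Real.sqrt (K / δ) with hM_def
  have hM0 : 0 < M := by positivity
  have hMδ : K / M ^ 2 < δ := by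
    have h1 : Real.sqrt (K / δ) < M := lt_one_add _
    have h2 : K / δ < M ^ 2 := by
      have hs := Real.sq_sqrt (le_of_lt (div_pos hK0 hδ))
      calc K / δ = Real.sqrt (K / δ) ^ 2 := hs.symm
        _ < M ^ 2 := by
          exact pow_lt_pow_left₀ h1 (Real.sqrt_nonneg _) (by norm_num)
    rw [div_lt_iff₀ (by positivity)]
    calc K = (K / δ) * δ := by field_simp
      _ < M ^ 2 * δ := mul_lt_mul_of_pos_right h2 hδ
      _ = δ * M ^ 2 := mul_comm _ _
  refine ⟨M, hM0, ?_⟩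
  filter_upwards [eventually_ge_atTop 1] with T hT
  have hTr : (1 : ℝ) ≤ (T : ℝ) := by exact_mod_cast hT
  have hTr0 : (0 : ℝ) < (T : ℝ) := lt_of_lt_of_le one_pos hTr
  have hTα1 : (1 : ℝ) ≤ (T : ℝ) ^ α := Real.one_le_rpow hTr (le_of_lt hα0)
  have hTα0 : (0 : ℝ) < (T : ℝ) ^ α := lt_of_lt_of_le one_pos hTα1
  set d : ℝ := a / (T : ℝ) ^ α with hd_def
  have hd0 : 0 < d := div_pos ha hTα0
  set φ : ℝ := 1 + d with hφ_def
  have hφ1 : 1 ≤ φ := le_add_of_nonneg_right hd0.le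
  have hφ0 : 0 < φ := lt_of_lt_of_le one_pos hφ1
  set n : ℕ := ⌊c * (T : ℝ)⌋₊ with hn_def
  obtain ⟨hSL2, hSmean, hSvar⟩ :=
    stmt15_moments (P := P) ε' σ hε'meas hindep' hmean' hvar' hL2' φ n
  -- a.e. identification of `y` with the explicit process
  have hyY : ∀ t, (fun ω => y T t ω) =ᵐ[P] stmt15Y ε' φ t := by
    intro t
    induction t with
    | zero =>
      refine Filter.Eventually.of_forall fun ω => ?_
      simp [hy0, stmt15Y]
    | succ t ih =>
      filter_upwards [ih, hae (t + 1)] with ω h1 h2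
      show y T (t + 1) ω = stmt15Y ε' φ (t + 1) ω
      rw [hyrec T t ω, stmt15Y_succ, ← h1, ← h2, hφ_def, hd_def]
  have hsum : (fun ω => ∑ t ∈ Finset.Icc 1 n, y T (t - 1) ω * ε t ω)
      =ᵐ[P] stmt15S ε' φ n := by
    have h1 : ∀ᵐ ω ∂P, ∀ t, y T t ω = stmt15Y ε' φ t ω := ae_all_iff.2 hyY
    have h2 : ∀ᵐ ω ∂P, ∀ t, ε t ω = ε' t ω := ae_all_iff.2 hae
    filter_upwards [h1, h2] with ω hω1 hω2
    show (∑ t ∈ Finset.Icc 1 n, y T (t - 1) ω * ε t ω) = stmt15S ε' φ n ω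
    unfold stmt15S
    exact Finset.sum_congr rfl fun t _ => by rw [hω1 (t - 1), hω2 t]
  set B : ℝ := M * (T : ℝ) ^ ((α + 1) / 2) * φ ^ n with hB_def
  have hB0 : 0 < B := by
    have := mul_pos (mul_pos hM0 (Real.rpow_pos_of_pos hTr0 ((α + 1) / 2))) (pow_pos hφ0 n)
    rw [hB_def]; exact this
  have hmc : P {ω | B < |∑ t ∈ Finset.Icc 1 n, y T (t - 1) ω * ε t ω|}
      = P {ω | B < |stmt15S ε' φ n ω|} := by
    refine measure_congr ?_
    filter_upwards [hsum] with ω hω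
    exact congrArg (fun z => B < |z|) hω
  rw [hmc]
  -- Chebyshev
  have hvarval : variance (stmt15S ε' φ n) P = ∫ ω, (stmt15S ε' φ n ω) ^ 2 ∂P := by
    rw [variance_eq_sub hSL2, hSmean]
    simp only [Pi.pow_apply]
    ring
  have chev := meas_ge_le_variance_div_sq (μ := P) hSL2 hB0
  have hsub : {ω | B < |stmt15S ε' φ n ω|}
      ⊆ {ω | B ≤ |stmt15S ε' φ n ω - ∫ ω', stmt15S ε' φ n ω' ∂P|} := by
    intro ω hω
    simp only [Set.mem_setOf_eq] at *
    rw [hSmean, sub_zero]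
    exact le_of_lt hω
  -- bounding the variance
  have hφsq1 : (1 : ℝ) ≤ φ ^ 2 := by nlinarith
  have hgeom : ∀ t, t ≤ n → (∑ j ∈ Finset.range t, (φ ^ 2) ^ j) ≤ (φ ^ 2) ^ n / (2 * d) := by
    intro t ht
    have h2d : (0 : ℝ) < 2 * d := by positivity
    rw [le_div_iff₀ h2d]
    have hsumnn : (0 : ℝ) ≤ ∑ j ∈ Finset.range t, (φ ^ 2) ^ j :=
      Finset.sum_nonneg fun j _ => pow_nonneg (sq_nonneg φ) j
    have hb : 2 * d ≤ φ ^ 2 - 1 := by nlinarith [sq_nonneg d]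
    calc (∑ j ∈ Finset.range t, (φ ^ 2) ^ j) * (2 * d)
        ≤ (∑ j ∈ Finset.range t, (φ ^ 2) ^ j) * (φ ^ 2 - 1) :=
          mul_le_mul_of_nonneg_left hb hsumnn
      _ = (φ ^ 2) ^ t - 1 := geom_sum_mul _ _
      _ ≤ (φ ^ 2) ^ n := by
          have h1 : (φ ^ 2) ^ t ≤ (φ ^ 2) ^ n := pow_le_pow_right₀ hφsq1 ht
          linarith
  have hvar_bound : variance (stmt15S ε' φ n) P
      ≤ K * ((T : ℝ) ^ (α + 1) * (φ ^ n) ^ 2) := by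
    rw [hvarval, hSvar]
    have hstep : ∀ t ∈ Finset.range n, σ ^ 2 * ∑ j ∈ Finset.range t, (φ ^ 2) ^ j
        ≤ σ ^ 2 * ((φ ^ 2) ^ n / (2 * d)) := fun t htm =>
      mul_le_mul_of_nonneg_left (hgeom t (le_of_lt (Finset.mem_range.1 htm))) (sq_nonneg σ)
    have hnle : (n : ℝ) ≤ c * (T : ℝ) := by
      rw [hn_def]; exact Nat.floor_le (by positivity)
    have hTsplit : (T : ℝ) ^ (α + 1) = (T : ℝ) ^ α * (T : ℝ) := by
      rw [Real.rpow_add hTr0, Real.rpow_one]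
    have hpow : (φ ^ 2) ^ n = (φ ^ n) ^ 2 := by rw [← pow_mul, ← pow_mul, mul_comm]
    calc σ ^ 2 * ∑ t ∈ Finset.range n, σ ^ 2 * ∑ j ∈ Finset.range t, (φ ^ 2) ^ j
        ≤ σ ^ 2 * ∑ _t ∈ Finset.range n, σ ^ 2 * ((φ ^ 2) ^ n / (2 * d)) :=
          mul_le_mul_of_nonneg_left (Finset.sum_le_sum hstep) (sq_nonneg σ)
      _ = σ ^ 2 * ((n : ℝ) * (σ ^ 2 * ((φ ^ 2) ^ n / (2 * d)))) := by
          rw [Finset.sum_const, Finset.card_range, nsmul_eq_mul]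
      _ = σ ^ 4 * (n : ℝ) * (φ ^ n) ^ 2 * (T : ℝ) ^ α / (2 * a) := by
          rw [hpow, hd_def]
          field_simp
      _ ≤ σ ^ 4 * (c * (T : ℝ)) * (φ ^ n) ^ 2 * (T : ℝ) ^ α / (2 * a) := by
          gcongr
      _ = K * ((T : ℝ) ^ (α + 1) * (φ ^ n) ^ 2) := by
          rw [hK_def, hTsplit]; ring
  calc P {ω | B < |stmt15S ε' φ n ω|}
      ≤ P {ω | B ≤ |stmt15S ε' φ n ω - ∫ ω', stmt15S ε' φ n ω' ∂P|} := measure_mono hsub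
    _ ≤ ENNReal.ofReal (variance (stmt15S ε' φ n) P / B ^ 2) := chev
    _ ≤ ENNReal.ofReal (K / M ^ 2) := by
        apply ENNReal.ofReal_le_ofReal
        have hT2 : ((T : ℝ) ^ ((α + 1) / 2)) ^ 2 = (T : ℝ) ^ (α + 1) := by
          rw [← Real.rpow_natCast ((T : ℝ) ^ ((α + 1) / 2)) 2,
            ← Real.rpow_mul (le_of_lt hTr0)]
          norm_num
        have hB2 : B ^ 2 = M ^ 2 * ((T : ℝ) ^ (α + 1) * (φ ^ n) ^ 2) := by
          rw [hB_def, mul_pow, mul_pow, hT2]; ring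
        rw [hB2]
        have hW0 : (0 : ℝ) < (T : ℝ) ^ (α + 1) * (φ ^ n) ^ 2 := by
          have := Real.rpow_pos_of_pos hTr0 (α + 1)
          positivity
        rw [div_le_div_iff₀ (by positivity) (by positivity)]
        nlinarith [hvar_bound, sq_nonneg M, hW0, hM0]
    _ < ENNReal.ofReal δ := (ENNReal.ofReal_lt_ofReal_iff hδ).2 hMδ
end
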